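/- arXiv:1309.7235 — 3 statements merged into one kernel-verified Lean document; each statement's English description precedes it below -/
import Mathlib

section
/- Define K_n(x) = (x-1)^{-1}[J_{n+1}(x) - A_n J_n(x)] (Christoffel transform of the big -1 Jacobi polynomials). Then K_n is a monic polynomial of degree n and satisfies the recurrence x K_n(x) = K_{n+1}(x) + (1 - A_n - C_{n+1}) K_n(x) + A_n C_n K_{n-1}(x). -/
/-!
The coefficients `1 - A n - C n` and `A (n-1) * C n` say that the Jacobi operator of `J`, shifted
by `1`, factors into two bidiagonal operators; the Christoffel transform swaps the factors, which
yields the recurrence for `K`. Concretely, after multiplication by the non-zero-divisor `X - 1` the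
recurrence for `K` is a linear combination of the definitions of three consecutive `K`'s and two
instances of the recurrence for `J`. At `n = 0` this needs `C 0 = 0`, which is forced by evaluating
the definition of `K 0` at `1`. Monicity and degrees pass from `J` to `K` because `X - 1` is monic.
-/

open Polynomial

namespace Polynomial

variable {R : Type*} [CommRing R]

theorem monic_sub_C_mul_of_natDegree_lt {p q : R[X]} (r : R) (hp : p.Monic)
    (hq : q.natDegree < p.natDegree) :
    (p - C r * q).Monic ∧ (p - C r * q).natDegree = p.natDegree := by
  have hlt : (C r * q).natDegree < p.natDegree := (natDegree_C_mul_le r q).trans_lt hq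
  exact ⟨hp.sub_of_left (degree_lt_degree hlt), natDegree_sub_eq_left_of_natDegree_lt hlt⟩

variable [Nontrivial R]

theorem monic_natDegree_of_X_sub_C_mul {p q : R[X]} {n : ℕ} (a : R) (h : (X - C a) * q = p)
    (hp : p.Monic) (hpn : p.natDegree = n + 1) : q.Monic ∧ q.natDegree = n := by
  have hq : q.Monic := (monic_X_sub_C a).of_mul_monic_left (h ▸ hp)
  refine ⟨hq, ?_⟩
  have := (monic_X_sub_C a).natDegree_mul hq
  rw [h, hpn, natDegree_X_sub_C] at this
  omega

theorem monic_natDegree_of_threeTermRecurrence (β γ : ℕ → R) {P : ℕ → R[X]} (h0 : P 0 = 1)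
    (h1 : X * P 0 = P 1 + C (β 0) * P 0)
    (hrec : ∀ n, X * P (n+1) = P (n+2) + C (β (n+1)) * P (n+1) + C (γ n) * P n) (n : ℕ) :
    (P n).Monic ∧ (P n).natDegree = n := by
  induction n using Nat.strong_induction_on with
  | _ n ih =>
    match n, ih with
    | 0, _ => simp [h0]
    | 1, _ =>
      have hP1 : P 1 = X - C (β 0) := by linear_combination -h1 + (X - C (β 0)) * h0
      rw [hP1]
      exact ⟨monic_X_sub_C _, natDegree_X_sub_C _⟩
    | n + 2, ih =>
      obtain ⟨hm1, hd1⟩ := ih (n + 1) (by omega)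
      have hd0 := (ih n (by omega)).2
      have hP : P (n+2) = (X - C (β (n+1))) * P (n+1) - C (γ n) * P n := by
        linear_combination -hrec n
      have hXm : ((X - C (β (n+1))) * P (n+1)).Monic := (monic_X_sub_C _).mul hm1
      have hXd : ((X - C (β (n+1))) * P (n+1)).natDegree = n + 2 := by
        rw [(monic_X_sub_C _).natDegree_mul hm1, natDegree_X_sub_C, hd1]; omega
      rw [hP, ← hXd]
      exact monic_sub_C_mul_of_natDegree_lt _ hXm (by omega)

end Polynomial

section ChristoffelTransform

variable {R : Type*} [CommRing R] {A Cs : ℕ → R} {J K : ℕ → R[X]}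

theorem Cs_zero_eq_zero_of_christoffel (hJ0 : J 0 = 1)
    (hJ1 : X * J 0 = J 1 + C (1 - A 0 - Cs 0) * J 0)
    (hK0 : (X - 1) * K 0 = J 1 - C (A 0) * J 0) : Cs 0 = 0 := by
  have hK0_one := congrArg (eval 1) hK0
  have hJ1_one := congrArg (eval 1) hJ1
  simp only [hJ0, eval_sub, eval_mul, eval_add, eval_X, eval_one, eval_C, sub_self, zero_mul,
    mul_one] at hK0_one hJ1_one
  linear_combination hJ1_one - hK0_one

theorem christoffel_recurrence_zero (hCs0 : Cs 0 = 0)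
    (hJ1 : X * J 0 = J 1 + C (1 - A 0 - Cs 0) * J 0)
    (hJ2 : X * J 1 = J 2 + C (1 - A 1 - Cs 1) * J 1 + C (A 0 * Cs 1) * J 0)
    (hK : ∀ n, (X - 1) * K n = J (n+1) - C (A n) * J n) :
    X * K 0 = K 1 + C (1 - A 0 - Cs 1) * K 0 := by
  apply (monic_X_sub_C (1 : R)).isRegular.left
  simp only [map_one, map_sub, map_mul, hCs0, map_zero] at hJ1 hJ2 hK ⊢
  linear_combination X * hK 0 - hK 1 - (1 - C (A 0) - C (Cs 1)) * hK 0 + hJ2 - C (A 0) * hJ1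

theorem christoffel_recurrence_succ
    (hJrec : ∀ n, X * J (n+1) = J (n+2) + C (1 - A (n+1) - Cs (n+1)) * J (n+1)
        + C (A n * Cs (n+1)) * J n)
    (hK : ∀ n, (X - 1) * K n = J (n+1) - C (A n) * J n) (n : ℕ) :
    X * K (n+1) = K (n+2) + C (1 - A (n+1) - Cs (n+2)) * K (n+1)
      + C (A (n+1) * Cs (n+1)) * K n := by
  apply (monic_X_sub_C (1 : R)).isRegular.left
  have hJ1 := hJrec n
  have hJ2 := hJrec (n+1)
  simp only [map_one, map_sub, map_mul] at hJ1 hJ2 hK ⊢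
  linear_combination X * hK (n+1) - hK (n+2) - (1 - C (A (n+1)) - C (Cs (n+2))) * hK (n+1)
    - C (A (n+1)) * C (Cs (n+1)) * hK n + hJ2 - C (A (n+1)) * hJ1

end ChristoffelTransform

theorem bigMinusOneJacobi_christoffel_general
    (A Cs : ℕ → ℝ)
    (J : ℕ → Polynomial ℝ)
    (hJ0 : J 0 = 1)
    (hJ1 : Polynomial.X * J 0 = J 1 + Polynomial.C (1 - A 0 - Cs 0) * J 0)
    (hJrec : ∀ n : ℕ,
      Polynomial.X * J (n+1) = J (n+2) + Polynomial.C (1 - A (n+1) - Cs (n+1)) * J (n+1)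
        + Polynomial.C (A n * Cs (n+1)) * J n)
    (K : ℕ → Polynomial ℝ)
    (hK : ∀ n : ℕ, (Polynomial.X - 1) * K n = J (n+1) - Polynomial.C (A n) * J n) :
    (∀ n : ℕ, (K n).Monic ∧ (K n).natDegree = n) ∧
    (Polynomial.X * K 0 = K 1 + Polynomial.C (1 - A 0 - Cs 1) * K 0) ∧
    (∀ n : ℕ, Polynomial.X * K (n+1) =
      K (n+2) + Polynomial.C (1 - A (n+1) - Cs (n+2)) * K (n+1)
        + Polynomial.C (A (n+1) * Cs (n+1)) * K n) := by
  have hJ : ∀ n, (J n).Monic ∧ (J n).natDegree = n :=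
    monic_natDegree_of_threeTermRecurrence (fun n => 1 - A n - Cs n)
      (fun n => A n * Cs (n+1)) hJ0 hJ1 hJrec
  refine ⟨fun n => ?_, christoffel_recurrence_zero (Cs_zero_eq_zero_of_christoffel hJ0 hJ1 (hK 0))
    hJ1 (hJrec 0) hK, christoffel_recurrence_succ hJrec hK⟩
  obtain ⟨hJm, hJd⟩ := hJ (n+1)
  obtain ⟨hm, hd⟩ :=
    monic_sub_C_mul_of_natDegree_lt (A n) hJm (by rw [(hJ n).2, hJd]; omega)
  exact monic_natDegree_of_X_sub_C_mul 1 (by rw [C_1]; exact hK n) hm (hd.trans hJd)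

/-- the Christoffel transform `K_n(x) = (x-1)^{-1}[J_{n+1}(x) - A_n J_n(x)]`
of the big `-1` Jacobi polynomials is a monic polynomial of degree `n` and satisfies
`x K_n = K_{n+1} + (1 - A_n - C_{n+1}) K_n + A_n C_n K_{n-1}`. -/
theorem bigMinusOneJacobi_christoffel
    (a b c : ℝ) (hc0 : 0 < c) (hc1 : c < 1)
    (hden : ∀ n : ℕ, 2*(n : ℝ) + a + b ≠ 0)
    (A Cs : ℕ → ℝ)
    (hAe : ∀ n : ℕ, A (2*n) = (1+c)*(a + 2*(n : ℝ) + 1)/(4*(n : ℝ) + a + b + 2))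
    (hAo : ∀ n : ℕ, A (2*n+1) = (1-c)*((2*(n : ℝ)+1) + a + b + 1)/(4*(n : ℝ) + 2 + a + b + 2))
    (hCe : ∀ n : ℕ, Cs (2*n) = (1-c)*(2*(n : ℝ))/(4*(n : ℝ) + a + b))
    (hCo : ∀ n : ℕ, Cs (2*n+1) = (1+c)*((2*(n : ℝ)+1) + b)/(4*(n : ℝ) + 2 + a + b))
    (J : ℕ → Polynomial ℝ)
    (hJ0 : J 0 = 1)
    (hJ1 : Polynomial.X * J 0 = J 1 + Polynomial.C (1 - A 0 - Cs 0) * J 0)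
    (hJrec : ∀ n : ℕ,
      Polynomial.X * J (n+1) = J (n+2) + Polynomial.C (1 - A (n+1) - Cs (n+1)) * J (n+1)
        + Polynomial.C (A n * Cs (n+1)) * J n)
    (K : ℕ → Polynomial ℝ)
    (hK : ∀ n : ℕ, (Polynomial.X - 1) * K n = J (n+1) - Polynomial.C (A n) * J n) :
    (∀ n : ℕ, (K n).Monic ∧ (K n).natDegree = n) ∧
    (Polynomial.X * K 0 = K 1 + Polynomial.C (1 - A 0 - Cs 1) * K 0) ∧
    (∀ n : ℕ, Polynomial.X * K (n+1) =
      K (n+2) + Polynomial.C (1 - A (n+1) - Cs (n+2)) * K (n+1)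
        + Polynomial.C (A (n+1) * Cs (n+1)) * K n) :=
  bigMinusOneJacobi_christoffel_general A Cs J hJ0 hJ1 hJrec K hK
end

section
/- With A_n, C_n the big -1 Jacobi recurrence coefficients, 1 - A_n - C_{n+1} = (-1)^{n+1} c and A_n C_n = f_n, where f_n = (1-c²)n(n+a+1)/((2n+a+b)(2n+a+b+2)) for n even and f_n = (1-c²)(n+b)(n+a+b+1)/((2n+a+b)(2n+a+b+2)) for n odd. -/
/-!
Both identities are pure algebra once `n` is split by parity. In the sum `A_n + C_{n+1}` the two
fractions share the denominator `2n + a + b + 2` and their numerators add up to it, leaving `1 ± c`;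
the products `A_n C_n` multiply numerators and denominators, giving `f_n` verbatim.
-/

theorem one_sub_mul_div_sub_mul_div_of_add_eq {K : Type*} [Field K] {x y D : K} (u : K)
    (hD : D ≠ 0) (hxy : x + y = D) : 1 - u * x / D - u * y / D = 1 - u := by
  rw [sub_sub, ← add_div, ← mul_add, hxy, mul_div_cancel_right₀ _ hD]

theorem bigMinusOneJacobi_coefficient_identities_general
    (a b c : ℝ)
    (hden : ∀ n : ℕ, 2*(n : ℝ) + a + b ≠ 0)
    (A Cs f : ℕ → ℝ)
    (hAe : ∀ n : ℕ, A (2*n) = (1+c)*(a + 2*(n : ℝ) + 1)/(4*(n : ℝ) + a + b + 2))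
    (hAo : ∀ n : ℕ, A (2*n+1) = (1-c)*((2*(n : ℝ)+1) + a + b + 1)/(4*(n : ℝ) + 2 + a + b + 2))
    (hCe : ∀ n : ℕ, Cs (2*n) = (1-c)*(2*(n : ℝ))/(4*(n : ℝ) + a + b))
    (hCo : ∀ n : ℕ, Cs (2*n+1) = (1+c)*((2*(n : ℝ)+1) + b)/(4*(n : ℝ) + 2 + a + b))
    (hfe : ∀ n : ℕ, f (2*n) =
      (1-c^2)*(2*(n : ℝ))*(2*(n : ℝ) + a + 1)/((4*(n : ℝ) + a + b)*(4*(n : ℝ) + a + b + 2)))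
    (hfo : ∀ n : ℕ, f (2*n+1) =
      (1-c^2)*((2*(n : ℝ)+1) + b)*((2*(n : ℝ)+1) + a + b + 1) /
        ((4*(n : ℝ) + 2 + a + b)*(4*(n : ℝ) + 2 + a + b + 2))) :
    ∀ n : ℕ, 1 - A n - Cs (n+1) = (-1 : ℝ)^(n+1) * c ∧ A n * Cs n = f n := by
  intro n
  obtain ⟨k, rfl | rfl⟩ := Nat.even_or_odd' n
  · have hD : 4*(k : ℝ) + 2 + a + b ≠ 0 := by
      convert hden (2*k+1) using 1; push_cast; ring
    refine ⟨?_, by rw [hAe, hCe, hfe, div_mul_div_comm]; ring_nf⟩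
    rw [hAe, hCo, show 4*(k : ℝ) + a + b + 2 = 4*k + 2 + a + b by ring,
      one_sub_mul_div_sub_mul_div_of_add_eq _ hD (by ring), pow_succ, pow_mul]
    norm_num
  · have hD : 4*(k : ℝ) + 2 + a + b + 2 ≠ 0 := by
      convert hden (2*k+2) using 1; push_cast; ring
    refine ⟨?_, by rw [hAo, hCo, hfo, div_mul_div_comm]; ring_nf⟩
    rw [hAo, show 2*k+1+1 = 2*(k+1) by ring, hCe, Nat.cast_succ,
      show 4*((k : ℝ) + 1) + a + b = 4*k + 2 + a + b + 2 by ring,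
      one_sub_mul_div_sub_mul_div_of_add_eq _ hD (by ring), pow_mul]
    norm_num

/-- `1 - A_n - C_{n+1} = (-1)^{n+1} c` and `A_n C_n = f_n` for the big `-1`
Jacobi recurrence coefficients. -/
theorem bigMinusOneJacobi_coefficient_identities
    (a b c : ℝ) (hc0 : 0 < c) (hc1 : c < 1)
    (hden : ∀ n : ℕ, 2*(n : ℝ) + a + b ≠ 0)
    (A Cs f : ℕ → ℝ)
    (hAe : ∀ n : ℕ, A (2*n) = (1+c)*(a + 2*(n : ℝ) + 1)/(4*(n : ℝ) + a + b + 2))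
    (hAo : ∀ n : ℕ, A (2*n+1) = (1-c)*((2*(n : ℝ)+1) + a + b + 1)/(4*(n : ℝ) + 2 + a + b + 2))
    (hCe : ∀ n : ℕ, Cs (2*n) = (1-c)*(2*(n : ℝ))/(4*(n : ℝ) + a + b))
    (hCo : ∀ n : ℕ, Cs (2*n+1) = (1+c)*((2*(n : ℝ)+1) + b)/(4*(n : ℝ) + 2 + a + b))
    (hfe : ∀ n : ℕ, f (2*n) =
      (1-c^2)*(2*(n : ℝ))*(2*(n : ℝ) + a + 1)/((4*(n : ℝ) + a + b)*(4*(n : ℝ) + a + b + 2)))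
    (hfo : ∀ n : ℕ, f (2*n+1) =
      (1-c^2)*((2*(n : ℝ)+1) + b)*((2*(n : ℝ)+1) + a + b + 1) /
        ((4*(n : ℝ) + 2 + a + b)*(4*(n : ℝ) + 2 + a + b + 2))) :
    ∀ n : ℕ, 1 - A n - Cs (n+1) = (-1 : ℝ)^(n+1) * c ∧ A n * Cs n = f n :=
  bigMinusOneJacobi_coefficient_identities_general a b c hden A Cs f hAe hAo hCe hCo hfe hfo
end

section
/- The generalized Hermite polynomials H_n^μ are eigenfunctions of the operator Ω^{(ε)} = -(1/2)∂_x² + (x - μ/x)∂_x + (μ/(2x²) + (ε-1)/2)(I - R), where R is the reflection Rf(x)=f(-x): for all x ≠ 0, Ω^{(ε)}H_n^μ(x) = λ_n^{(ε)} H_n^μ(x), with λ_{2n}^{(ε)} = 2n and λ_{2n+1}^{(ε)} = 2n + ε. -/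
/-- Pochhammer symbol `(a)_k` over the reals. -/
noncomputable def poch (a : ℝ) (k : ℕ) : ℝ := (ascPochhammer ℝ k).eval a

/-- Terminating confluent hypergeometric sum `₁F₁(-n; b; z)`. -/
noncomputable def hyp1F1 (n : ℕ) (b z : ℝ) : ℝ :=
  ∑ k ∈ Finset.range (n+1),
    poch (-(n : ℝ)) k / (poch b k * (Nat.factorial k : ℝ)) * z ^ k

/-!
Writing `t = x²`, the operator sends `G(x²)` to `-2 (t G'' + (μ + 1/2 - t) G')` and `x G(x²)` to
`-2x (t G'' + (μ + 3/2 - t) G') + ε x G`, the reflection term cancelling on even functions and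
on odd ones its `μ/x²` part cancelling the `-μ G/x` coming from the drift. So both cases reduce to
Kummer's equation `t w'' + (b - t) w' + n w = 0` for `w = ₁F₁(-n; b; t)`, which on coefficients is
the recurrence `c_{k+1} (k + 1) (b + k) = c_k (k - n)` of the hypergeometric coefficients.
-/

open Polynomial Finset

noncomputable def hyp1F1Coeff (n : ℕ) (b : ℝ) (k : ℕ) : ℝ :=
  poch (-(n : ℝ)) k / (poch b k * (k.factorial : ℝ))

noncomputable def hyp1F1Poly (n : ℕ) (b : ℝ) : ℝ[X] :=
  ∑ k ∈ range (n + 1), C (hyp1F1Coeff n b k) * X ^ k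

theorem poch_succ (b : ℝ) (k : ℕ) : poch b (k + 1) = poch b k * (b + k) := by
  simp [poch, ascPochhammer_succ_right]

theorem hyp1F1Coeff_eq_zero {n k : ℕ} (b : ℝ) (h : n < k) : hyp1F1Coeff n b k = 0 := by
  simp [hyp1F1Coeff, poch, ascPochhammer_eval_neg_coe_nat_of_lt h]

theorem hyp1F1Coeff_succ_mul (n : ℕ) {b : ℝ} {k : ℕ} (hbk : b + k ≠ 0) :
    hyp1F1Coeff n b (k + 1) * ((k + 1) * (b + k)) = hyp1F1Coeff n b k * (k - n) := by
  rcases eq_or_ne (poch b k) 0 with h | h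
  -- then `poch b (k + 1) = 0` too, and both sides are `0` through division by zero
  · simp [hyp1F1Coeff, poch_succ, h]
  · simp only [hyp1F1Coeff, poch_succ, Nat.factorial_succ, Nat.cast_mul, Nat.cast_succ]
    field_simp
    ring

theorem coeff_hyp1F1Poly (n : ℕ) (b : ℝ) (k : ℕ) :
    (hyp1F1Poly n b).coeff k = hyp1F1Coeff n b k := by
  simp only [hyp1F1Poly, finsetSum_coeff, coeff_C_mul_X_pow]
  rw [Finset.sum_ite_eq]
  split_ifs with h
  · rfl
  · exact (hyp1F1Coeff_eq_zero b (by simpa using h)).symm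

theorem hyp1F1_eq_eval (n : ℕ) (b : ℝ) : hyp1F1 n b = fun z => (hyp1F1Poly n b).eval z := by
  funext z
  simp [hyp1F1, hyp1F1Poly, eval_finsetSum, hyp1F1Coeff]

theorem hyp1F1Poly_kummer (n : ℕ) {b : ℝ} (hb : ∀ k < n, b + k ≠ 0) :
    X * derivative (derivative (hyp1F1Poly n b)) + (C b - X) * derivative (hyp1F1Poly n b)
      + C (n : ℝ) * hyp1F1Poly n b = 0 := by
  have hrec : ∀ k, hyp1F1Coeff n b (k + 1) * ((k + 1) * (b + k)) = hyp1F1Coeff n b k * (k - n) := by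
    intro k
    rcases lt_or_ge k n with hk | hk
    · exact hyp1F1Coeff_succ_mul n (hb k hk)
    · rcases hk.eq_or_lt with rfl | hk
      · simp [hyp1F1Coeff_eq_zero b (Nat.lt_succ_self n)]
      · simp [hyp1F1Coeff_eq_zero b hk, hyp1F1Coeff_eq_zero b (hk.trans (Nat.lt_succ_self k))]
  ext (_ | k)
  · simp only [sub_mul, coeff_add, coeff_sub, coeff_C_mul, coeff_X_mul_zero, coeff_derivative,
      coeff_hyp1F1Poly, coeff_zero]
    push_cast
    linear_combination hrec 0
  · simp only [sub_mul, coeff_add, coeff_sub, coeff_C_mul, coeff_X_mul, coeff_derivative,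
      coeff_hyp1F1Poly, coeff_zero]
    have h := hrec (k + 1)
    push_cast at h ⊢
    linear_combination h

theorem deriv_hyp1F1 (n : ℕ) (b : ℝ) :
    deriv (hyp1F1 n b) = fun z => (derivative (hyp1F1Poly n b)).eval z := by
  rw [hyp1F1_eq_eval]
  exact funext fun z => Polynomial.deriv _

theorem differentiable_hyp1F1 (n : ℕ) (b : ℝ) : Differentiable ℝ (hyp1F1 n b) := by
  rw [hyp1F1_eq_eval]
  exact Polynomial.differentiable _

theorem differentiable_deriv_hyp1F1 (n : ℕ) (b : ℝ) : Differentiable ℝ (deriv (hyp1F1 n b)) := by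
  rw [deriv_hyp1F1]
  exact Polynomial.differentiable _

theorem hyp1F1_kummer (n : ℕ) {b : ℝ} (hb : ∀ k < n, b + k ≠ 0) (z : ℝ) :
    z * deriv (deriv (hyp1F1 n b)) z + (b - z) * deriv (hyp1F1 n b) z = -n * hyp1F1 n b z := by
  have h := congrArg (eval z) (hyp1F1Poly_kummer n hb)
  simp only [eval_add, eval_mul, eval_sub, eval_X, eval_C, eval_zero] at h
  rw [deriv_hyp1F1, Polynomial.deriv, hyp1F1_eq_eval]
  linear_combination h

noncomputable def generalizedHermiteOperator (μ ε : ℝ) (f : ℝ → ℝ) (x : ℝ) : ℝ :=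
  -(1/2) * deriv (deriv f) x + (x - μ/x) * deriv f x + (μ/(2*x^2) + (ε-1)/2) * (f x - f (-x))

theorem generalizedHermiteOperator_const_mul (μ ε c : ℝ) (f : ℝ → ℝ) (x : ℝ) :
    generalizedHermiteOperator μ ε (fun y => c * f y) x =
      c * generalizedHermiteOperator μ ε f x := by
  simp only [generalizedHermiteOperator, deriv_const_mul_field']
  ring

theorem hasDerivAt_comp_sq {G : ℝ → ℝ} {G' x : ℝ} (hG : HasDerivAt G G' (x ^ 2)) :
    HasDerivAt (fun y => G (y ^ 2)) (2 * x * G') x := by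
  refine (hG.comp (h := fun y => y ^ 2) x (hasDerivAt_pow 2 x)).congr_deriv (by norm_num [mul_comm])

theorem deriv_comp_sq {G : ℝ → ℝ} (hG : Differentiable ℝ G) :
    deriv (fun y => G (y ^ 2)) = fun y => 2 * y * deriv G (y ^ 2) :=
  funext fun _ => (hasDerivAt_comp_sq (hG _).hasDerivAt).deriv

theorem deriv_mul_comp_sq {G : ℝ → ℝ} (hG : Differentiable ℝ G) :
    deriv (fun y => y * G (y ^ 2)) = fun y => G (y ^ 2) + 2 * y ^ 2 * deriv G (y ^ 2) := by
  funext y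
  rw [((hasDerivAt_id' y).fun_mul (hasDerivAt_comp_sq (hG _).hasDerivAt)).deriv]
  ring

theorem generalizedHermiteOperator_comp_sq (μ ε : ℝ) {G : ℝ → ℝ} (hG : Differentiable ℝ G)
    (hG' : Differentiable ℝ (deriv G)) {x : ℝ} (hx : x ≠ 0) :
    generalizedHermiteOperator μ ε (fun y => G (y ^ 2)) x
      = -2 * (x ^ 2 * deriv (deriv G) (x ^ 2) + (μ + 1/2 - x ^ 2) * deriv G (x ^ 2)) := by
  have h2 := ((hasDerivAt_id' x).const_mul 2).fun_mul (hasDerivAt_comp_sq (hG' (x ^ 2)).hasDerivAt)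
  simp only [generalizedHermiteOperator, deriv_comp_sq hG, h2.deriv, neg_sq, sub_self, mul_zero]
  field_simp
  ring

theorem generalizedHermiteOperator_mul_comp_sq (μ ε : ℝ) {G : ℝ → ℝ} (hG : Differentiable ℝ G)
    (hG' : Differentiable ℝ (deriv G)) {x : ℝ} (hx : x ≠ 0) :
    generalizedHermiteOperator μ ε (fun y => y * G (y ^ 2)) x
      = -2 * x * (x ^ 2 * deriv (deriv G) (x ^ 2) + (μ + 3/2 - x ^ 2) * deriv G (x ^ 2))
        + ε * (x * G (x ^ 2)) := by
  have h2 := (hasDerivAt_comp_sq (hG (x ^ 2)).hasDerivAt).fun_add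
    (((hasDerivAt_pow 2 x).const_mul 2).fun_mul (hasDerivAt_comp_sq (hG' (x ^ 2)).hasDerivAt))
  simp only [generalizedHermiteOperator, deriv_mul_comp_sq hG, h2.deriv, neg_sq]
  field_simp
  ring

/-- the generalized Hermite polynomials are eigenfunctions of
`Ω^{(ε)} = -(1/2)∂² + (x - μ/x)∂ + (μ/(2x²) + (ε-1)/2)(I - R)`. -/
theorem generalizedHermite_eigenvalue_equation
    (μ ε : ℝ) (hμ : μ > -1/2) (H : ℕ → ℝ → ℝ)
    (hEven : ∀ (n : ℕ) (x : ℝ),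
      H (2*n) x = (-1 : ℝ)^n * poch (μ + 1/2) n * hyp1F1 n (μ + 1/2) (x^2))
    (hOdd : ∀ (n : ℕ) (x : ℝ),
      H (2*n+1) x = (-1 : ℝ)^n * poch (μ + 3/2) n * x * hyp1F1 n (μ + 3/2) (x^2))
    (lam : ℕ → ℝ)
    (hle : ∀ n : ℕ, lam (2*n) = 2*(n : ℝ))
    (hlo : ∀ n : ℕ, lam (2*n+1) = 2*(n : ℝ) + ε) :
    ∀ (n : ℕ) (x : ℝ), x ≠ 0 →
      -(1/2) * deriv (deriv (H n)) x + (x - μ/x) * deriv (H n) x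
        + (μ/(2*x^2) + (ε-1)/2) * (H n x - H n (-x)) = lam n * H n x := by
  intro n x hx
  change generalizedHermiteOperator μ ε (H n) x = lam n * H n x
  obtain ⟨m, rfl | rfl⟩ := Nat.even_or_odd' n
  · have hb : ∀ k < m, μ + 1/2 + k ≠ 0 := fun k _ => by linarith [k.cast_nonneg (α := ℝ)]
    have hH : H (2 * m) = fun y => (-1) ^ m * poch (μ + 1/2) m * hyp1F1 m (μ + 1/2) (y ^ 2) :=
      funext (hEven m)
    rw [hH, generalizedHermiteOperator_const_mul, generalizedHermiteOperator_comp_sq μ ε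
      (differentiable_hyp1F1 _ _) (differentiable_deriv_hyp1F1 _ _) hx, hle]
    linear_combination (-2 * (-1) ^ m * poch (μ + 1/2) m) * hyp1F1_kummer m hb (x ^ 2)
  · have hb : ∀ k < m, μ + 3/2 + k ≠ 0 := fun k _ => by linarith [k.cast_nonneg (α := ℝ)]
    have hH : H (2 * m + 1) =
        fun y => (-1) ^ m * poch (μ + 3/2) m * (y * hyp1F1 m (μ + 3/2) (y ^ 2)) :=
      funext fun y => by rw [hOdd, mul_assoc]
    rw [hH, generalizedHermiteOperator_const_mul, generalizedHermiteOperator_mul_comp_sq μ ε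
      (differentiable_hyp1F1 _ _) (differentiable_deriv_hyp1F1 _ _) hx, hlo]
    linear_combination (-2 * x * (-1) ^ m * poch (μ + 3/2) m) * hyp1F1_kummer m hb (x ^ 2)
end
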